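/- arXiv:dg-ga/9704002 — 2 statements merged into one kernel-verified Lean document; each statement's English description precedes it below -/
import Mathlib

section
/- With notation as in the definition of π via a suitable bilinear form: if β is nondegenerate and suitable, and the spinor representation of spin(V_0) on V_1 preserves β infinitesimally (elements of spin(V_0) act β-skew-symmetrically on V_1), then π is spin(V_0)-equivariant: for all A ∈ spin(V_0) acting as σ(A) on V_1 and as A on V_0, one has A·π(s,t) = π(σ(A)s, t) + π(s, σ(A)t). -/
/- STATEMENT 8: If β is nondegenerate and suitable, and spin(V₀) acts β-skew-symmetrically
on V₁ (preserving β infinitesimally), then π is spin(V₀)-equivariant: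
A·π(s,t) = π(σ(A)s, t) + π(s, σ(A)t), where A ∈ spin(V₀) ≅ so(V₀) acts as A on V₀ and
as σ(A) on V₁ with σ(A)ρ(v) - ρ(v)σ(A) = ρ(Av). -/

theorem pi_equivariant {V₀ V₁ : Type*}
    [AddCommGroup V₀] [Module ℝ V₀] [AddCommGroup V₁] [Module ℝ V₁]
    (B : V₀ →ₗ[ℝ] V₀ →ₗ[ℝ] ℝ)
    (hBsym : ∀ v w, B v w = B w v)
    (hBnd : ∀ v, (∀ w, B v w = 0) → v = 0)
    (ρ : V₀ →ₗ[ℝ] Module.End ℝ V₁)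
    (β : V₁ →ₗ[ℝ] V₁ →ₗ[ℝ] ℝ) (σβ τ : ℝ)
    (hσβ : σβ = 1 ∨ σβ = -1) (hτ : τ = 1 ∨ τ = -1)
    (hβsym : ∀ s t : V₁, β s t = σβ * β t s)
    (hβtype : ∀ (v : V₀) (s t : V₁), β (ρ v s) t = τ * β s (ρ v t))
    (hsuitable : σβ * τ = 1)
    (hβnd : ∀ s, (∀ t, β s t = 0) → s = 0)
    (π : V₁ →ₗ[ℝ] V₁ →ₗ[ℝ] V₀)
    (hπ : ∀ (s t : V₁) (v : V₀), B (π s t) v = β (ρ v s) t)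
    -- A ∈ so(V₀), acting on V₁ as S = σ(A)
    (A : V₀ →ₗ[ℝ] V₀) (hA : ∀ v w, B (A v) w = - B v (A w))
    (S : V₁ →ₗ[ℝ] V₁)
    (hβinv : ∀ s t : V₁, β (S s) t + β s (S t) = 0)
    (hcomm : ∀ v : V₀, S ∘ₗ ρ v - ρ v ∘ₗ S = ρ (A v)) :
    ∀ s t : V₁, A (π s t) = π (S s) t + π s (S t) := by
  intro s t
  have key : ∀ v : V₀, B (A (π s t) - (π (S s) t + π s (S t))) v = 0 := by
    intro v
    have hc := congrArg (fun f => (f : V₁ →ₗ[ℝ] V₁) s) (hcomm v)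
    simp only [LinearMap.sub_apply, LinearMap.comp_apply] at hc
    have h1 : B (A (π s t)) v = - β (ρ (A v) s) t := by
      rw [hA, hπ]
    have h2 : β (ρ (A v) s) t = -(β (ρ v s) (S t) + β (ρ v (S s)) t) := by
      have hc2 := congrArg (fun f => (f : V₁ →ₗ[ℝ] V₁) s) (hcomm v)
      simp only [LinearMap.sub_apply, LinearMap.comp_apply] at hc2
      rw [← hc2]
      have hinv := hβinv (ρ v s) t
      simp only [map_sub, LinearMap.sub_apply]
      linarith
    simp only [map_sub, map_add, LinearMap.sub_apply, LinearMap.add_apply, h1, h2,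
      hπ (S s) t v, hπ s (S t) v]
    ring
  exact sub_eq_zero.mp (hBnd _ key)
end

section
/- In the setting of the Poincaré super Lie algebra p(V) = spin(V_0) + V_0 + V_1 with [V_1,V_1] = V_0 (π surjective), the kernel of the induced representation α : p(V) → gl(V*) on V* ≅ p(V)*/V^⊥ is exactly V_0. Hence α induces a faithful representation of the super Lie algebra p(V)/V_0 on V*. -/
/- STATEMENT 10: For the Poincaré super Lie algebra p(V) = spin(V₀) + V₀ + V₁ with
[V₁,V₁] = V₀ (π surjective, coming from a nondegenerate suitable bilinear form β) and
faithful spin representation on V₁, the kernel of the representation α : p(V) → gl(V*)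
induced by the coadjoint representation is exactly V₀.  Since α(a) is (up to sign) given
on functionals by precomposition with ad_a|_V, the kernel of α consists of those
a = (x,v,s) such that every linear functional kills ad_a(z) = (⁅x,z₀⁆ + π(s,z₁), ⁅x,z₁⁆)
for all z ∈ V = V₀ + V₁. -/

theorem ker_alpha_eq_V0 {g V₀ V₁ : Type*} [LieRing g] [LieAlgebra ℝ g]
    [AddCommGroup V₀] [Module ℝ V₀] [LieRingModule g V₀] [LieModule ℝ g V₀]
    [AddCommGroup V₁] [Module ℝ V₁] [LieRingModule g V₁] [LieModule ℝ g V₁]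
    [FiniteDimensional ℝ V₀] [Nontrivial V₀]
    (B : V₀ →ₗ[ℝ] V₀ →ₗ[ℝ] ℝ)
    (hBsym : ∀ v w, B v w = B w v)
    (hBnd : ∀ v, (∀ w, B v w = 0) → v = 0)
    (ρ : V₀ →ₗ[ℝ] Module.End ℝ V₁)
    (hCl : ∀ v : V₀, ρ v ∘ₗ ρ v = B v v • (LinearMap.id : V₁ →ₗ[ℝ] V₁))
    (β : V₁ →ₗ[ℝ] V₁ →ₗ[ℝ] ℝ)
    (hβnd : ∀ s, (∀ t, β s t = 0) → s = 0)
    (π : V₁ →ₗ[ℝ] V₁ →ₗ[ℝ] V₀)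
    (hπ : ∀ (s t : V₁) (v : V₀), B (π s t) v = β (ρ v s) t)
    -- [V₁,V₁] = V₀ : π is surjective
    (hπsurj : Submodule.span ℝ {v : V₀ | ∃ s t : V₁, π s t = v} = ⊤)
    -- the spin representation on V₁ is faithful
    (hfaithful : ∀ x : g, (∀ t : V₁, ⁅x, t⁆ = 0) → x = 0) :
    {a : g × V₀ × V₁ | ∀ (f : Module.Dual ℝ (V₀ × V₁)) (z : V₀ × V₁),
        f (⁅a.1, z.1⁆ + π a.2.2 z.2, ⁅a.1, z.2⁆) = 0}
      = {a : g × V₀ × V₁ | a.1 = 0 ∧ a.2.2 = 0} := by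
  -- first: B has a vector of nonzero "norm" (anisotropic vector exists)
  have hexists : ∃ v : V₀, B v v ≠ 0 := by
    by_contra h
    push_neg at h
    have hzero : ∀ v w : V₀, B v w = 0 := by
      intro v w
      have h1 := h (v + w)
      simp only [map_add, LinearMap.add_apply] at h1
      rw [h v, h w, hBsym w v] at h1
      linarith
    obtain ⟨v, hv⟩ := exists_ne (0 : V₀)
    exact hv (hBnd v (hzero v))
  ext a
  simp only [Set.mem_setOf_eq]
  constructor
  · intro h
    have hvec : ∀ z : V₀ × V₁, (⁅a.1, z.1⁆ + π a.2.2 z.2, ⁅a.1, z.2⁆) = (0 : V₀ × V₁) := by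
      intro z
      rw [← Module.forall_dual_apply_eq_zero_iff ℝ]
      exact fun f => h f z
    have hx : a.1 = 0 := by
      apply hfaithful
      intro t
      have := hvec (0, t)
      exact (Prod.mk.injEq _ _ _ _ ▸ this).2
    refine ⟨hx, ?_⟩
    have hπ0 : ∀ t : V₁, π a.2.2 t = 0 := by
      intro t
      have := hvec (0, t)
      have h1 := (Prod.mk.injEq _ _ _ _ ▸ this).1
      simpa using h1
    have hρ0 : ∀ v : V₀, ρ v a.2.2 = 0 := by
      intro v
      apply hβnd
      intro t
      have := hπ a.2.2 t v
      rw [hπ0 t] at this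
      simpa using this.symm
    obtain ⟨v, hv⟩ := hexists
    have := hCl v
    have h2 : ρ v (ρ v a.2.2) = B v v • a.2.2 := by
      have := congrArg (fun (L : V₁ →ₗ[ℝ] V₁) => L a.2.2) this
      simpa using this
    rw [hρ0 v, map_zero] at h2
    have := h2.symm
    rwa [smul_eq_zero_iff_right hv] at this
  · rintro ⟨hx, hs⟩ f z
    rw [hx, hs]
    simp
    exact map_zero f
end
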